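/- Let uV, uF : ℤ × ℤ → (Fin 3 → ℝ), hV, hF : ℤ × ℤ → ℝ, and let σV, σF : ℤ × ℤ → ℝ be nowhere zero with ⟪uV(v), uF(f)⟫ = σV(v)·σF(f) for every incident vertex–face pair (v, f). Then the following are equivalent: (a) for every p ∈ ℤ × ℤ the four vectors (u(q), h(q)) ∈ ℝ⁴, q ranging over the quad p, p+(1,0), p+(0,1), p+(1,1) (both for the vertex data (uV, hV) and for the face data (uF, hF)), span a submodule of ℝ⁴ of finrank at most 3 — i.e. the four planes {x : ⟪u(q), x⟫ + h(q) = 0} of each quad are concurrent in the projective sense (the bi*net is conjugate); (b) for every such quad the four Laguerre lift vectors (u(q), σ(q), h(q)) ∈ ℝ⁵ span a submodule of ℝ⁵ of finrank at most 3 (the Laguerre lift is a conjugate binet). -/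
import Mathlib


open Matrix

/-- A vertex `v` is incident to the face labeled `f` if `v` is one of its four corners. -/
def Incident (v f : ℤ × ℤ) : Prop :=
  v = f ∨ v = f + (1, 0) ∨ v = f + (0, 1) ∨ v = f + (1, 1)

/-- The vector `(u, h) ∈ ℝ⁴` of the plane `{x : ⟪u, x⟫ + h = 0}` in dual homogeneous
coordinates. -/
def lift4 (u : Fin 3 → ℝ) (h : ℝ) : Fin 4 → ℝ := ![u 0, u 1, u 2, h]

/-- The Laguerre lift vector `(u, σ, h) ∈ ℝ⁵`. -/
def lift5 (u : Fin 3 → ℝ) (σ h : ℝ) : Fin 5 → ℝ := ![u 0, u 1, u 2, σ, h]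

noncomputable def Lmap (c : Fin 3 → ℝ) : (Fin 4 → ℝ) →ₗ[ℝ] (Fin 5 → ℝ) :=
  LinearMap.pi ![LinearMap.proj 0, LinearMap.proj 1, LinearMap.proj 2,
    c 0 • LinearMap.proj 0 + c 1 • LinearMap.proj 1 + c 2 • LinearMap.proj 2,
    LinearMap.proj 3]

lemma Lmap_inj (c : Fin 3 → ℝ) : Function.Injective (Lmap c) := by
  rw [← LinearMap.ker_eq_bot]
  ext x
  simp only [LinearMap.mem_ker, Submodule.mem_bot]
  constructor
  · intro hx
    funext i
    have h0 := congrFun hx 0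
    have h1 := congrFun hx 1
    have h2 := congrFun hx 2
    have h4 := congrFun hx 4
    simp [Lmap, LinearMap.pi_apply] at h0 h1 h2 h4
    fin_cases i <;> simpa
  · rintro rfl; simp

lemma Lmap_lift4 (c u : Fin 3 → ℝ) (h : ℝ) :
    Lmap c (lift4 u h) = lift5 u (u ⬝ᵥ c) h := by
  funext i
  fin_cases i <;>
    simp [Lmap, lift4, lift5, dotProduct, Fin.sum_univ_three, mul_comm]

lemma key_rank (c : Fin 3 → ℝ) (a : Fin 4 → Fin 3 → ℝ) (σ h : Fin 4 → ℝ)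
    (hc : ∀ i, a i ⬝ᵥ c = σ i) :
    Module.finrank ℝ (Submodule.span ℝ
      ({lift5 (a 0) (σ 0) (h 0), lift5 (a 1) (σ 1) (h 1),
        lift5 (a 2) (σ 2) (h 2), lift5 (a 3) (σ 3) (h 3)} : Set (Fin 5 → ℝ))) =
    Module.finrank ℝ (Submodule.span ℝ
      ({lift4 (a 0) (h 0), lift4 (a 1) (h 1),
        lift4 (a 2) (h 2), lift4 (a 3) (h 3)} : Set (Fin 4 → ℝ))) := by
  have himg : (Lmap c) '' {lift4 (a 0) (h 0), lift4 (a 1) (h 1),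
      lift4 (a 2) (h 2), lift4 (a 3) (h 3)} =
      {lift5 (a 0) (σ 0) (h 0), lift5 (a 1) (σ 1) (h 1),
       lift5 (a 2) (σ 2) (h 2), lift5 (a 3) (σ 3) (h 3)} := by
    simp only [Set.image_insert_eq, Set.image_singleton, Lmap_lift4, hc]
  rw [← himg, ← Submodule.map_span]
  exact (LinearEquiv.finrank_eq
    (Submodule.equivMapOfInjective _ (Lmap_inj c) _)).symm

/-- For an orthogonal bi*net with Laguerre lift data (`⟪uV v, uF f⟫ = σV(v)σF(f)` on incident
pairs, `σ` nowhere zero), the bi*net is conjugate (the four planes of each quad are concurrent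
in the projective sense, i.e. the vectors `(u, h)` of each quad span a submodule of `ℝ⁴` of
finrank at most `3`) if and only if the Laguerre lift is a conjugate binet (the four lift
vectors `(u, σ, h)` of each quad span a submodule of `ℝ⁵` of finrank at most `3`). -/
theorem stmt_11 (uV uF : ℤ × ℤ → Fin 3 → ℝ) (hV hF σV σF : ℤ × ℤ → ℝ)
    (hσV : ∀ v : ℤ × ℤ, σV v ≠ 0) (hσF : ∀ f : ℤ × ℤ, σF f ≠ 0)
    (hpolar : ∀ v f : ℤ × ℤ, Incident v f → uV v ⬝ᵥ uF f = σV v * σF f) :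
    (∀ p : ℤ × ℤ,
      Module.finrank ℝ (Submodule.span ℝ
        ({lift4 (uV p) (hV p), lift4 (uV (p + (1, 0))) (hV (p + (1, 0))),
          lift4 (uV (p + (0, 1))) (hV (p + (0, 1))),
          lift4 (uV (p + (1, 1))) (hV (p + (1, 1)))} : Set (Fin 4 → ℝ))) ≤ 3 ∧
      Module.finrank ℝ (Submodule.span ℝ
        ({lift4 (uF p) (hF p), lift4 (uF (p + (1, 0))) (hF (p + (1, 0))),
          lift4 (uF (p + (0, 1))) (hF (p + (0, 1))),
          lift4 (uF (p + (1, 1))) (hF (p + (1, 1)))} : Set (Fin 4 → ℝ))) ≤ 3) ↔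
    (∀ p : ℤ × ℤ,
      Module.finrank ℝ (Submodule.span ℝ
        ({lift5 (uV p) (σV p) (hV p), lift5 (uV (p + (1, 0))) (σV (p + (1, 0))) (hV (p + (1, 0))),
          lift5 (uV (p + (0, 1))) (σV (p + (0, 1))) (hV (p + (0, 1))),
          lift5 (uV (p + (1, 1))) (σV (p + (1, 1))) (hV (p + (1, 1)))} : Set (Fin 5 → ℝ))) ≤ 3 ∧
      Module.finrank ℝ (Submodule.span ℝ
        ({lift5 (uF p) (σF p) (hF p), lift5 (uF (p + (1, 0))) (σF (p + (1, 0))) (hF (p + (1, 0))),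
          lift5 (uF (p + (0, 1))) (σF (p + (0, 1))) (hF (p + (0, 1))),
          lift5 (uF (p + (1, 1))) (σF (p + (1, 1))) (hF (p + (1, 1)))} : Set (Fin 5 → ℝ))) ≤ 3) := by
  have hVrank : ∀ p : ℤ × ℤ,
      Module.finrank ℝ (Submodule.span ℝ
        ({lift5 (uV p) (σV p) (hV p), lift5 (uV (p + (1, 0))) (σV (p + (1, 0))) (hV (p + (1, 0))),
          lift5 (uV (p + (0, 1))) (σV (p + (0, 1))) (hV (p + (0, 1))),
          lift5 (uV (p + (1, 1))) (σV (p + (1, 1))) (hV (p + (1, 1)))} : Set (Fin 5 → ℝ))) =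
      Module.finrank ℝ (Submodule.span ℝ
        ({lift4 (uV p) (hV p), lift4 (uV (p + (1, 0))) (hV (p + (1, 0))),
          lift4 (uV (p + (0, 1))) (hV (p + (0, 1))),
          lift4 (uV (p + (1, 1))) (hV (p + (1, 1)))} : Set (Fin 4 → ℝ))) := by
    intro p
    exact key_rank ((σF p)⁻¹ • uF p)
      ![uV p, uV (p + (1, 0)), uV (p + (0, 1)), uV (p + (1, 1))]
      ![σV p, σV (p + (1, 0)), σV (p + (0, 1)), σV (p + (1, 1))]
      ![hV p, hV (p + (1, 0)), hV (p + (0, 1)), hV (p + (1, 1))]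
      (by
        intro i
        have hii : ∀ q : ℤ × ℤ, Incident q p → uV q ⬝ᵥ ((σF p)⁻¹ • uF p) = σV q := by
          intro q hq
          rw [dotProduct_smul, hpolar q p hq, smul_eq_mul, mul_comm (σV q),
            ← mul_assoc, inv_mul_cancel₀ (hσF p), one_mul]
        fin_cases i
        · exact hii p (Or.inl rfl)
        · exact hii _ (Or.inr (Or.inl rfl))
        · exact hii _ (Or.inr (Or.inr (Or.inl rfl)))
        · exact hii _ (Or.inr (Or.inr (Or.inr rfl))))
  have hFrank : ∀ p : ℤ × ℤ,
      Module.finrank ℝ (Submodule.span ℝ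
        ({lift5 (uF p) (σF p) (hF p), lift5 (uF (p + (1, 0))) (σF (p + (1, 0))) (hF (p + (1, 0))),
          lift5 (uF (p + (0, 1))) (σF (p + (0, 1))) (hF (p + (0, 1))),
          lift5 (uF (p + (1, 1))) (σF (p + (1, 1))) (hF (p + (1, 1)))} : Set (Fin 5 → ℝ))) =
      Module.finrank ℝ (Submodule.span ℝ
        ({lift4 (uF p) (hF p), lift4 (uF (p + (1, 0))) (hF (p + (1, 0))),
          lift4 (uF (p + (0, 1))) (hF (p + (0, 1))),
          lift4 (uF (p + (1, 1))) (hF (p + (1, 1)))} : Set (Fin 4 → ℝ))) := by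
    intro p
    exact key_rank ((σV (p + (1, 1)))⁻¹ • uV (p + (1, 1)))
      ![uF p, uF (p + (1, 0)), uF (p + (0, 1)), uF (p + (1, 1))]
      ![σF p, σF (p + (1, 0)), σF (p + (0, 1)), σF (p + (1, 1))]
      ![hF p, hF (p + (1, 0)), hF (p + (0, 1)), hF (p + (1, 1))]
      (by
        intro i
        have hii : ∀ q : ℤ × ℤ, Incident (p + (1, 1)) q →
            uF q ⬝ᵥ ((σV (p + (1, 1)))⁻¹ • uV (p + (1, 1))) = σF q := by
          intro q hq
          rw [dotProduct_smul, dotProduct_comm, hpolar _ q hq, smul_eq_mul,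
            inv_mul_cancel_left₀ (hσV _)]
        fin_cases i
        · exact hii p (Or.inr (Or.inr (Or.inr rfl)))
        · exact hii _ (Or.inr (Or.inr (Or.inl (by ext <;> simp))))
        · exact hii _ (Or.inr (Or.inl (by ext <;> simp)))
        · exact hii _ (Or.inl rfl))
  constructor
  · intro H p
    exact ⟨by rw [hVrank p]; exact (H p).1, by rw [hFrank p]; exact (H p).2⟩
  · intro H p
    exact ⟨by rw [← hVrank p]; exact (H p).1, by rw [← hFrank p]; exact (H p).2⟩
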